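/- Let f : ℝ → ℝ be twice continuously differentiable with f, f′, and f″ all bounded. Let u ∈ ℝ, σ ∈ ℝ, and x ∈ ℝ. Then the limit as t → 0⁺ of (1/t)·(∫ f(x + u·t + w) d(gaussianReal 0 (σ²·t))(w) − f(x)) exists and equals u·f′(x) + (σ²/2)·f″(x). -/

import Mathlib

/-!
Substitute `t = s²` and write the Gaussian increment as `s * Z` with `Z ~ N(0, σ²)`. Expanding
`f (x + h) = f x + f' x * h + r h` along `h = u s² + s Z`, the linear part contributes exactly
`u f' x` because `Z` is centred. By second-order Taylor, `r h / s² → f'' x * Z² / 2` pointwise,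
while `|r h| ≤ C h²` (from `|f''| ≤ C`) dominates `r h / s²` by an integrable quadratic in `Z`
for `|s| ≤ 1`; dominated convergence gives the limit `f'' x * E[Z²] / 2 = σ² f'' x / 2`.
-/

open MeasureTheory ProbabilityTheory Filter Topology Asymptotics

noncomputable def firstOrderRemainder (f : ℝ → ℝ) (x h : ℝ) : ℝ :=
  f (x + h) - f x - deriv f x * h

section Taylor

variable {f : ℝ → ℝ} {x : ℝ}

lemma continuous_firstOrderRemainder (hf : Continuous f) :
    Continuous (firstOrderRemainder f x) := by
  unfold firstOrderRemainder
  fun_prop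

lemma hasDerivAt_firstOrderRemainder (hf : Differentiable ℝ f) (h : ℝ) :
    HasDerivAt (firstOrderRemainder f x) (deriv f (x + h) - deriv f x) h :=
  ((((hf (x + h)).hasDerivAt.comp_const_add x h).sub_const (f x)).fun_sub
    ((hasDerivAt_id h).const_mul (deriv f x))).congr_deriv (by simp)

lemma abs_firstOrderRemainder_le (hf : Differentiable ℝ f) (hf' : Differentiable ℝ (deriv f))
    {C : ℝ} (hC : ∀ y, |deriv (deriv f) y| ≤ C) (h : ℝ) :
    |firstOrderRemainder f x h| ≤ C * h ^ 2 := by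
  have hC0 : 0 ≤ C := (abs_nonneg _).trans (hC x)
  have hlip : ∀ s, |deriv f (x + s) - deriv f x| ≤ C * |s| := fun s => by
    simpa using convex_univ.norm_image_sub_le_of_norm_deriv_le (fun y _ => hf' y)
      (fun y _ => hC y) (Set.mem_univ x) (Set.mem_univ (x + s))
  have hmvt := (convex_closedBall (0 : ℝ) |h|).norm_image_sub_le_of_norm_hasDerivWithin_le
    (x := 0) (y := h) (C := C * |h|)
    (fun s _ => (hasDerivAt_firstOrderRemainder hf s).hasDerivWithinAt)
    (fun s hs => (hlip s).trans (mul_le_mul_of_nonneg_left (by simpa using hs) hC0))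
    (Metric.mem_closedBall_self (abs_nonneg h)) (by simp)
  simpa [firstOrderRemainder, sq, mul_assoc] using hmvt

lemma isLittleO_firstOrderRemainder_sub_sq (hf : Differentiable ℝ f)
    (hf' : DifferentiableAt ℝ (deriv f) x) :
    (fun h => firstOrderRemainder f x h - deriv (deriv f) x / 2 * h ^ 2) =o[𝓝 0]
      fun h => h ^ 2 := by
  have hderiv : ∀ h,
      HasDerivAt (fun h => firstOrderRemainder f x h - deriv (deriv f) x / 2 * h ^ 2)
        (deriv f (x + h) - deriv f x - h * deriv (deriv f) x) h := fun h =>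
    ((hasDerivAt_firstOrderRemainder hf h).fun_sub
      ((hasDerivAt_pow 2 h).const_mul (deriv (deriv f) x / 2))).congr_deriv (by simp; ring)
  have hf'_taylor := hasDerivAt_iff_isLittleO_nhds_zero.mp hf'.hasDerivAt
  simpa [firstOrderRemainder] using convex_univ.isLittleO_pow_succ_real (Set.mem_univ 0)
    (fun h _ => (hderiv h).hasDerivWithinAt) (n := 1) (by simpa using hf'_taylor)

lemma tendsto_firstOrderRemainder_div_sq (hf : Differentiable ℝ f)
    (hf' : DifferentiableAt ℝ (deriv f) x) (u z : ℝ) :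
    Tendsto (fun s => firstOrderRemainder f x (s * (u * s + z)) / s ^ 2) (𝓝[≠] 0)
      (𝓝 (deriv (deriv f) x / 2 * z ^ 2)) := by
  set c := deriv (deriv f) x / 2
  have hquad : Tendsto (fun s : ℝ => (u * s + z) ^ 2) (𝓝 0) (𝓝 (z ^ 2)) :=
    (by fun_prop : Continuous fun s : ℝ => (u * s + z) ^ 2).tendsto' 0 _ (by simp)
  have hsmall : (fun s => firstOrderRemainder f x (s * (u * s + z)) - c * (s * (u * s + z)) ^ 2)
      =o[𝓝 0] fun s => s ^ 2 := by
    have hincr : Tendsto (fun s : ℝ => s * (u * s + z)) (𝓝 0) (𝓝 0) :=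
      (by fun_prop : Continuous fun s : ℝ => s * (u * s + z)).tendsto' 0 _ (by simp)
    refine ((isLittleO_firstOrderRemainder_sub_sq hf hf').comp_tendsto hincr).trans_isBigO ?_
    simpa [Function.comp_def, mul_pow] using
      (isBigO_refl (fun s : ℝ => s ^ 2) _).mul (hquad.isBigO_one ℝ)
  have hsum := (hsmall.tendsto_div_nhds_zero.add (hquad.const_mul c)).mono_left
    (nhdsWithin_le_nhds (s := {0}ᶜ))
  rw [zero_add] at hsum
  refine hsum.congr' ?_
  filter_upwards [self_mem_nhdsWithin] with s (hs : s ≠ 0)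
  field_simp
  ring

end Taylor

section Integral

variable {μ : Measure ℝ} [IsProbabilityMeasure μ] {f : ℝ → ℝ} {x C : ℝ}

lemma integrable_firstOrderRemainder (hμ : MemLp id 2 μ) (hf : Differentiable ℝ f)
    (hf' : Differentiable ℝ (deriv f)) (hC : ∀ y, |deriv (deriv f) y| ≤ C) (u s : ℝ) :
    Integrable (fun z => firstOrderRemainder f x (s * (u * s + z))) μ := by
  have hsq : MemLp (fun z => s * (u * s + z)) 2 μ := ((memLp_const (u * s)).add hμ).const_mul s
  refine (hsq.integrable_sq.const_mul C).mono' ?_ (ae_of_all _ fun z => ?_)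
  · exact ((continuous_firstOrderRemainder hf.continuous).comp
      (by fun_prop)).aestronglyMeasurable
  · exact abs_firstOrderRemainder_le hf hf' hC _

lemma tendsto_integral_firstOrderRemainder_div_sq (hμ : MemLp id 2 μ) (hf : Differentiable ℝ f)
    (hf' : Differentiable ℝ (deriv f)) (hC : ∀ y, |deriv (deriv f) y| ≤ C) (u : ℝ) :
    Tendsto (fun s => ∫ z, firstOrderRemainder f x (s * (u * s + z)) / s ^ 2 ∂μ) (𝓝[≠] 0)
      (𝓝 (deriv (deriv f) x / 2 * ∫ z, z ^ 2 ∂μ)) := by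
  have hC0 : 0 ≤ C := (abs_nonneg _).trans (hC x)
  have hbound : ∀ s, |s| ≤ 1 → ∀ z,
      ‖firstOrderRemainder f x (s * (u * s + z)) / s ^ 2‖ ≤ 2 * C * (u ^ 2 + z ^ 2) := by
    intro s hs z
    have hus : (u * s) ^ 2 ≤ u ^ 2 := by
      rw [mul_pow]
      exact mul_le_of_le_one_right (sq_nonneg u) (sq_le_one_iff_abs_le_one s |>.mpr hs)
    rw [Real.norm_eq_abs, abs_div, abs_of_nonneg (sq_nonneg s)]
    refine div_le_of_le_mul₀ (sq_nonneg s) (by positivity) ?_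
    calc |firstOrderRemainder f x (s * (u * s + z))| ≤ C * (s * (u * s + z)) ^ 2 :=
          abs_firstOrderRemainder_le hf hf' hC _
      _ = C * (u * s + z) ^ 2 * s ^ 2 := by ring
      _ ≤ C * (2 * (u ^ 2 + z ^ 2)) * s ^ 2 := by
          gcongr
          exact add_sq_le.trans (by gcongr)
      _ = 2 * C * (u ^ 2 + z ^ 2) * s ^ 2 := by ring
  rw [← integral_const_mul]
  refine tendsto_integral_filter_of_dominated_convergence (fun z => 2 * C * (u ^ 2 + z ^ 2))
    (Eventually.of_forall fun s => ?_) ?_ ?_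
    (ae_of_all _ fun z => tendsto_firstOrderRemainder_div_sq hf (hf' x) u z)
  · exact ((continuous_firstOrderRemainder hf.continuous).comp
      (by fun_prop)).div_const _ |>.aestronglyMeasurable
  · have hs : ∀ᶠ s : ℝ in 𝓝[≠] 0, |s| ≤ 1 := nhdsWithin_le_nhds <|
      (continuous_abs.tendsto' 0 0 abs_zero).eventually (eventually_le_nhds one_pos)
    exact hs.mono fun s hs => ae_of_all _ (hbound s hs)
  · exact ((integrable_const (u ^ 2)).add hμ.integrable_sq).const_mul (2 * C)

lemma integral_sub_div_sq_eq (hμ : MemLp id 2 μ) (hmean : ∫ z, z ∂μ = 0)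
    (hf : Differentiable ℝ f) (hf' : Differentiable ℝ (deriv f))
    (hC : ∀ y, |deriv (deriv f) y| ≤ C) (u : ℝ) {s : ℝ} (hs : s ≠ 0) :
    ((∫ z, f (x + u * s ^ 2 + s * z) ∂μ) - f x) / s ^ 2
      = u * deriv f x + ∫ z, firstOrderRemainder f x (s * (u * s + z)) / s ^ 2 ∂μ := by
  have hid : Integrable (fun z => z) μ := hμ.integrable one_le_two
  have hlin : Integrable (fun z => f x + deriv f x * u * s ^ 2 + deriv f x * s * z) μ :=
    (integrable_const _).add (hid.const_mul _)
  have hlin_int : ∫ z, f x + deriv f x * u * s ^ 2 + deriv f x * s * z ∂μ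
      = f x + deriv f x * u * s ^ 2 := by
    rw [integral_add (integrable_const _) (hid.const_mul _), integral_const_mul, hmean]
    simp
  have hsplit : ∀ z, f (x + u * s ^ 2 + s * z)
      = (f x + deriv f x * u * s ^ 2 + deriv f x * s * z)
        + firstOrderRemainder f x (s * (u * s + z)) := fun z => by
    simp only [firstOrderRemainder]
    ring_nf
  simp_rw [hsplit]
  rw [integral_add hlin (integrable_firstOrderRemainder hμ hf hf' hC u s), hlin_int,
    integral_div]
  field_simp
  ring

theorem tendsto_integral_sub_div_sq (hμ : MemLp id 2 μ) (hmean : ∫ z, z ∂μ = 0)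
    (hf : Differentiable ℝ f) (hf' : Differentiable ℝ (deriv f))
    (hC : ∀ y, |deriv (deriv f) y| ≤ C) (u : ℝ) :
    Tendsto (fun s => ((∫ z, f (x + u * s ^ 2 + s * z) ∂μ) - f x) / s ^ 2) (𝓝[≠] 0)
      (𝓝 (u * deriv f x + deriv (deriv f) x / 2 * ∫ z, z ^ 2 ∂μ)) :=
  ((tendsto_integral_firstOrderRemainder_div_sq hμ hf hf' hC u).const_add _).congr'
    (eventually_mem_nhdsWithin.mono fun _ hs =>
      (integral_sub_div_sq_eq hμ hmean hf hf' hC u hs).symm)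

end Integral

lemma integral_gaussianReal_mul_sq_var {E : Type*} [NormedAddCommGroup E] [NormedSpace ℝ E]
    (g : ℝ → E) (σ : ℝ) {s : ℝ} (hs : s ≠ 0) :
    ∫ w, g w ∂gaussianReal 0 (σ ^ 2 * s ^ 2).toNNReal
      = ∫ z, g (s * z) ∂gaussianReal 0 (σ ^ 2).toNNReal := by
  have hmap : (gaussianReal 0 (σ ^ 2).toNNReal).map (s * ·)
      = gaussianReal 0 (σ ^ 2 * s ^ 2).toNNReal := by
    rw [gaussianReal_map_const_mul, mul_zero]
    congr 1
    ext
    simp [mul_comm, sq_nonneg, mul_nonneg]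
  rw [← hmap, (measurableEmbedding_mulLeft₀ hs).integral_map]

lemma integral_sq_gaussianReal (v : NNReal) : ∫ z, z ^ 2 ∂gaussianReal 0 v = v := by
  rw [← variance_id_gaussianReal (μ := 0),
    variance_of_integral_eq_zero measurable_id.aemeasurable integral_id_gaussianReal]
  rfl

theorem generator_one_dim_general (f : ℝ → ℝ) (hf : ContDiff ℝ 2 f)
    (hf''_bdd : ∃ C, ∀ x, |deriv (deriv f) x| ≤ C)
    (u σ x : ℝ) :
    Tendsto
      (fun t : ℝ =>
        ((∫ w : ℝ, f (x + u * t + w) ∂(gaussianReal 0 (σ ^ 2 * t).toNNReal)) - f x) / t)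
      (nhdsWithin 0 (Set.Ioi 0))
      (nhds (u * deriv f x + σ ^ 2 / 2 * deriv (deriv f) x)) := by
  obtain ⟨C, hC⟩ := hf''_bdd
  have hf' : Differentiable ℝ (deriv f) := (hf.deriv' (n := 1)).differentiable one_ne_zero
  have hlim := tendsto_integral_sub_div_sq (μ := gaussianReal 0 (σ ^ 2).toNNReal)
    (x := x) (memLp_id_gaussianReal 2) integral_id_gaussianReal (hf.differentiable two_ne_zero)
    hf' hC u
  have hvar : deriv (deriv f) x / 2 * ∫ z, z ^ 2 ∂gaussianReal 0 (σ ^ 2).toNNReal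
      = σ ^ 2 / 2 * deriv (deriv f) x := by
    rw [integral_sq_gaussianReal, Real.coe_toNNReal _ (sq_nonneg σ)]
    ring
  rw [hvar] at hlim
  have hsqrt : Tendsto Real.sqrt (𝓝[>] 0) (𝓝[≠] 0) :=
    tendsto_nhdsWithin_iff.2 ⟨Real.continuous_sqrt.tendsto' 0 0 Real.sqrt_zero |>.mono_left
      nhdsWithin_le_nhds, eventually_mem_nhdsWithin.mono fun t ht => (Real.sqrt_pos.2 ht).ne'⟩
  refine (hlim.comp hsqrt).congr' (eventually_mem_nhdsWithin.mono fun t (ht : 0 < t) => ?_)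
  have hscale := integral_gaussianReal_mul_sq_var (fun w => f (x + u * t + w)) σ
    (Real.sqrt_pos.2 ht).ne'
  rw [Real.sq_sqrt ht.le] at hscale
  simp only [Function.comp_apply, Real.sq_sqrt ht.le, hscale]

theorem generator_one_dim (f : ℝ → ℝ) (hf : ContDiff ℝ 2 f)
    (hf_bdd : ∃ C, ∀ x, |f x| ≤ C)
    (hf'_bdd : ∃ C, ∀ x, |deriv f x| ≤ C)
    (hf''_bdd : ∃ C, ∀ x, |deriv (deriv f) x| ≤ C)
    (u σ x : ℝ) :
    Tendsto
      (fun t : ℝ =>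
        ((∫ w : ℝ, f (x + u * t + w) ∂(gaussianReal 0 (σ ^ 2 * t).toNNReal)) - f x) / t)
      (nhdsWithin 0 (Set.Ioi 0))
      (nhds (u * deriv f x + σ ^ 2 / 2 * deriv (deriv f) x)) :=
  generator_one_dim_general f hf hf''_bdd u σ x
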